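/- Let n_s ≥ 2, let Δs_0, …, Δs_{n_s-1} > 0, K_∥ > 0, γ ≥ 0, Δt > 0. Suppose (T_i^n)_{0≤i≤n_s-1, n∈ℕ} satisfies the implicit finite volume scheme (T_i^{n+1} − T_i^n)/Δt = (F_{i+1/2}^{n+1} − F_{i−1/2}^{n+1})/Δs_i, where for 0 ≤ i ≤ n_s−2, F_{i+1/2}^{n+1} = (4K_∥/7)·(|T_{i+1}^{n+1}|^{5/2} T_{i+1}^{n+1} − |T_i^{n+1}|^{5/2} T_i^{n+1})/(Δs_{i+1} + Δs_i), and F_{−1/2}^{n+1} = γ T_0^{n+1}, F_{n_s−1/2}^{n+1} = −γ T_{n_s−1}^{n+1}, with T_i^0 ≥ 0 for all i. Then the discrete L² norm is non-increasing: for every n ∈ ℕ, Σ_{i=0}^{n_s−1} Δs_i |T_i^{n+1}|² ≤ Σ_{i=0}^{n_s−1} Δs_i |T_i^n|², and in particular Σ_i Δs_i |T_i^{n+1}|² ≤ Σ_i Δs_i |T_i^0|². -/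

import Mathlib

/-!
Multiplying the scheme in cell `i` by `Δt Δs_i T_i^{n+1}` and summing, the left side dominates
half the increment of the discrete L² energy, since `u² - v² ≤ 2 (u - v) u`. Summation by parts
turns the right side into boundary terms `-γ T²` and interior terms
`-F_{i+1/2} (T_{i+1} - T_i)`, all nonpositive: the interior flux is a positive multiple of
`φ(T_{i+1}) - φ(T_i)` with `φ x = |x|^{5/2} x` monotone.
-/

open Finset

theorem monotone_abs_rpow_mul_self {p : ℝ} (hp : 0 ≤ p) : Monotone fun x : ℝ => |x| ^ p * x := by
  refine monotone_of_odd_of_monotoneOn_nonneg (fun x => by simp only [abs_neg, mul_neg]) ?_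
  intro x hx y hy hxy
  simp only [abs_of_nonneg (Set.mem_Ici.mp hx), abs_of_nonneg (Set.mem_Ici.mp hy)]
  exact mul_le_mul (Real.rpow_le_rpow hx hxy hp) hxy hx (Real.rpow_nonneg hy p)

theorem Monotone.sub_mul_sub_nonneg {f : ℝ → ℝ} (hf : Monotone f) (a b : ℝ) :
    0 ≤ (f a - f b) * (a - b) :=
  (hf.monovary monotone_id).sub_mul_sub_nonneg b a

theorem sum_range_succ_flux_sub_mul (F u : ℕ → ℝ) (m : ℕ) :
    ∑ i ∈ range (m + 1), (F (i + 1) - F i) * u i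
      = F (m + 1) * u m - F 0 * u 0 - ∑ i ∈ range m, F (i + 1) * (u (i + 1) - u i) := by
  induction m with
  | zero => simp only [zero_add, sum_range_one, range_zero, sum_empty]; ring
  | succ m ih => rw [sum_range_succ, ih, sum_range_succ]; ring

theorem sum_flux_sub_mul_nonpos {F u : ℕ → ℝ} {m : ℕ}
    (hleft : 0 ≤ F 0 * u 0) (hright : F m * u (m - 1) ≤ 0)
    (hinterior : ∀ i, i + 1 < m → 0 ≤ F (i + 1) * (u (i + 1) - u i)) :
    ∑ i ∈ range m, (F (i + 1) - F i) * u i ≤ 0 := by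
  cases m with
  | zero => simp
  | succ m =>
    have hsum : 0 ≤ ∑ i ∈ range m, F (i + 1) * (u (i + 1) - u i) :=
      sum_nonneg fun i hi => hinterior i (by simpa using hi)
    rw [sum_range_succ_flux_sub_mul]
    rw [Nat.add_sub_cancel] at hright
    linarith

theorem sum_mul_sq_le_of_conservative_step {w u v F : ℕ → ℝ} {τ : ℝ} {m : ℕ}
    (hw : ∀ i < m, 0 ≤ w i) (hτ : 0 ≤ τ)
    (hstep : ∀ i < m, w i * (u i - v i) = τ * (F (i + 1) - F i))
    (hleft : 0 ≤ F 0 * u 0) (hright : F m * u (m - 1) ≤ 0)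
    (hinterior : ∀ i, i + 1 < m → 0 ≤ F (i + 1) * (u (i + 1) - u i)) :
    ∑ i ∈ range m, w i * u i ^ 2 ≤ ∑ i ∈ range m, w i * v i ^ 2 := by
  have hwork : ∑ i ∈ range m, w i * (u i - v i) * u i
      = τ * ∑ i ∈ range m, (F (i + 1) - F i) * u i := by
    rw [mul_sum]
    refine sum_congr rfl fun i hi => ?_
    rw [hstep i (mem_range.mp hi)]
    ring
  have hwork_nonpos : ∑ i ∈ range m, w i * (u i - v i) * u i ≤ 0 := by
    rw [hwork]
    exact mul_nonpos_of_nonneg_of_nonpos hτ (sum_flux_sub_mul_nonpos hleft hright hinterior)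
  have hterm : ∀ i ∈ range m, w i * u i ^ 2 - w i * v i ^ 2 ≤ 2 * (w i * (u i - v i) * u i) :=
    fun i hi => by nlinarith [mul_nonneg (hw i (mem_range.mp hi)) (sq_nonneg (u i - v i))]
  have := sum_le_sum hterm
  rw [sum_sub_distrib, ← mul_sum] at this
  linarith

theorem implicit_scheme_L2_stability_general
    (ns : ℕ)
    (Δs : ℕ → ℝ) (hΔs : ∀ i < ns, 0 < Δs i)
    (K γ Δt : ℝ) (hK : 0 < K) (hγ : 0 ≤ γ) (hΔt : 0 < Δt)
    (T F : ℕ → ℕ → ℝ)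
    (hF0 : ∀ n, F n 0 = γ * T n 0)
    (hFns : ∀ n, F n ns = -γ * T n (ns - 1))
    (hFint : ∀ n i, 1 ≤ i → i ≤ ns - 1 →
      F n i = (4 * K / 7) *
        (|T n i| ^ ((5:ℝ)/2) * T n i - |T n (i-1)| ^ ((5:ℝ)/2) * T n (i-1))
        / (Δs i + Δs (i-1)))
    (hscheme : ∀ n, ∀ i < ns,
      (T (n+1) i - T n i) / Δt = (F (n+1) (i+1) - F (n+1) i) / Δs i) :
    (∀ n, (∑ i ∈ Finset.range ns, Δs i * |T (n+1) i|^2)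
        ≤ ∑ i ∈ Finset.range ns, Δs i * |T n i|^2)
    ∧ (∀ n, (∑ i ∈ Finset.range ns, Δs i * |T (n+1) i|^2)
        ≤ ∑ i ∈ Finset.range ns, Δs i * |T 0 i|^2) := by
  have hφ := monotone_abs_rpow_mul_self (p := 5 / 2) (by norm_num)
  have hstep : ∀ n, (∑ i ∈ range ns, Δs i * |T (n + 1) i| ^ 2)
      ≤ ∑ i ∈ range ns, Δs i * |T n i| ^ 2 := by
    intro n
    simp only [sq_abs]
    refine sum_mul_sq_le_of_conservative_step (F := F (n + 1)) (fun i hi => (hΔs i hi).le) hΔt.le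
      (fun i hi => ?_) ?_ ?_ (fun i hi => ?_)
    · have h := hscheme n i hi
      rw [div_eq_div_iff hΔt.ne' (hΔs i hi).ne'] at h
      linear_combination h
    · rw [hF0]; nlinarith [sq_nonneg (T (n + 1) 0)]
    · rw [hFns]; nlinarith [sq_nonneg (T (n + 1) (ns - 1))]
    · rw [hFint (n + 1) (i + 1) (by omega) (by omega), Nat.add_sub_cancel, div_mul_eq_mul_div,
        mul_assoc]
      have hd : 0 < Δs (i + 1) + Δs i := add_pos (hΔs _ hi) (hΔs i (by omega))
      exact div_nonneg (mul_nonneg (by positivity) (hφ.sub_mul_sub_nonneg _ _)) hd.le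
  exact ⟨hstep, fun n => antitone_nat_of_succ_le (f := fun n => ∑ i ∈ range ns, Δs i * |T n i| ^ 2) hstep
    (Nat.zero_le (n + 1))⟩

/-- Discrete L² stability part of Proposition 2.2 for the backward Euler
finite volume scheme for the 1D nonlinear heat equation: the discrete L²
norm is non-increasing in time.  Here `F n i` denotes the numerical flux
`F_{i-1/2}^n` computed from the values at time level `n`. -/
theorem implicit_scheme_L2_stability
    (ns : ℕ) (hns : 2 ≤ ns)
    (Δs : ℕ → ℝ) (hΔs : ∀ i < ns, 0 < Δs i)
    (K γ Δt : ℝ) (hK : 0 < K) (hγ : 0 ≤ γ) (hΔt : 0 < Δt)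
    (T F : ℕ → ℕ → ℝ)
    (hF0 : ∀ n, F n 0 = γ * T n 0)
    (hFns : ∀ n, F n ns = -γ * T n (ns - 1))
    (hFint : ∀ n i, 1 ≤ i → i ≤ ns - 1 →
      F n i = (4 * K / 7) *
        (|T n i| ^ ((5:ℝ)/2) * T n i - |T n (i-1)| ^ ((5:ℝ)/2) * T n (i-1))
        / (Δs i + Δs (i-1)))
    (hscheme : ∀ n, ∀ i < ns,
      (T (n+1) i - T n i) / Δt = (F (n+1) (i+1) - F (n+1) i) / Δs i)
    (hinit : ∀ i < ns, 0 ≤ T 0 i) :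
    (∀ n, (∑ i ∈ Finset.range ns, Δs i * |T (n+1) i|^2)
        ≤ ∑ i ∈ Finset.range ns, Δs i * |T n i|^2)
    ∧ (∀ n, (∑ i ∈ Finset.range ns, Δs i * |T (n+1) i|^2)
        ≤ ∑ i ∈ Finset.range ns, Δs i * |T 0 i|^2) :=
  implicit_scheme_L2_stability_general ns Δs hΔs K γ Δt hK hγ hΔt T F hF0 hFns hFint hscheme
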